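/- Let G be a group and C ⊆ G a normal cone whose induced relation ≥ is a partial order. If f and g are both dominants, then γ(f,g)·γ(g,f) ≥ 1. -/

import Mathlib

/-!
Write `a_k = γ_k(f,g)`. Since `f^{a_k} ≥ g^k`, the definition of `γ_{a_k}(g,f)` gives
`g^{γ_{a_k}(g,f)} ≥ f^{a_k} ≥ g^k`, and in a partially ordered cone `g^b ≥ g^k` forces `b ≥ k`.
Hence `γ_{a_k}(g,f)/a_k · a_k/k ≥ 1`. As `k ≤ γ_{a_k}(g,f) ≤ a_k γ_1(g,f)`, the indices `a_k`
tend to infinity, so the first factor tends to `γ(g,f)` and the second to `γ(f,g)`.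
-/

open Filter

/-- A subset `C` of a group is a *normal cone* if it contains `1`, is closed under
multiplication, and is invariant under conjugation. -/
def IsNormalCone {G : Type*} [Group G] (C : Set G) : Prop :=
  (1 : G) ∈ C ∧ (∀ f g : G, f ∈ C → g ∈ C → f * g ∈ C) ∧
    (∀ f h : G, f ∈ C → h * f * h⁻¹ ∈ C)

/-- The relation `f ≥ g` induced by the cone `C`: `f * g⁻¹ ∈ C`. -/
def ConeGe {G : Type*} [Group G] (C : Set G) (f g : G) : Prop := f * g⁻¹ ∈ C

/-- `f` is a *dominant*: it lies in the cone, is not `1`, and some power of `f`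
dominates any given element. -/
def IsDominant {G : Type*} [Group G] (C : Set G) (f : G) : Prop :=
  f ∈ C ∧ f ≠ 1 ∧ ∀ g : G, ∃ p : ℕ, ConeGe C (f ^ p) g

/-- `γ_k(f,g) = inf { p ∈ ℤ | f^p ≥ g^k }`. -/
noncomputable def gammaK {G : Type*} [Group G] (C : Set G) (f g : G) (k : ℕ) : ℤ :=
  sInf {p : ℤ | ConeGe C (f ^ p) (g ^ k)}

section Cone

variable {G : Type*} [Group G] {C : Set G}

theorem coneGe_one_iff {f : G} : ConeGe C f 1 ↔ f ∈ C := by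
  simp [ConeGe]

theorem ConeGe.trans (hC : IsNormalCone C) {a b c : G} (hab : ConeGe C a b)
    (hbc : ConeGe C b c) : ConeGe C a c := by
  simpa [ConeGe, mul_assoc] using hC.2.1 _ _ hab hbc

theorem ConeGe.mul (hC : IsNormalCone C) {a b u v : G} (hab : ConeGe C a b)
    (huv : ConeGe C u v) : ConeGe C (a * u) (b * v) := by
  simpa [ConeGe, mul_assoc] using hC.2.1 _ _ (hC.2.2 _ a huv) hab

theorem ConeGe.pow (hC : IsNormalCone C) {a b : G} (hab : ConeGe C a b) :
    ∀ m : ℕ, ConeGe C (a ^ m) (b ^ m)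
  | 0 => by simpa [ConeGe] using hC.1
  | m + 1 => by simpa only [pow_succ] using (hab.pow hC m).mul hC hab

theorem IsNormalCone.pow_mem (hC : IsNormalCone C) {f : G} (hf : f ∈ C) :
    ∀ m : ℕ, f ^ m ∈ C := by
  simpa [coneGe_one_iff] using (coneGe_one_iff.mpr hf).pow hC

theorem IsNormalCone.zpow_mem_iff (hC : IsNormalCone C)
    (hanti : ∀ f g : G, ConeGe C f g → ConeGe C g f → f = g)
    {f : G} (hf : f ∈ C) (hf1 : f ≠ 1) {p : ℤ} : f ^ p ∈ C ↔ 0 ≤ p := by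
  refine ⟨fun hp => ?_, fun hp => ?_⟩
  · by_contra! hneg
    have hinv : f⁻¹ ∈ C := by
      have h := hC.2.1 _ _ hp (hC.pow_mem hf (-1 - p).toNat)
      rwa [← zpow_natCast, Int.toNat_of_nonneg (by omega), ← zpow_add, add_sub_cancel,
        zpow_neg_one] at h
    exact hf1 (hanti f 1 (coneGe_one_iff.mpr hf) (by simpa [ConeGe] using hinv))
  · lift p to ℕ using hp
    simpa using hC.pow_mem hf p

theorem coneGe_zpow_zpow_iff (hC : IsNormalCone C)
    (hanti : ∀ f g : G, ConeGe C f g → ConeGe C g f → f = g)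
    {f : G} (hf : f ∈ C) (hf1 : f ≠ 1) {p q : ℤ} : ConeGe C (f ^ p) (f ^ q) ↔ q ≤ p := by
  rw [ConeGe, ← zpow_sub, hC.zpow_mem_iff hanti hf hf1, sub_nonneg]

end Cone

section Gamma

variable {G : Type*} [Group G] {C : Set G} {f g : G}
  (hC : IsNormalCone C) (hanti : ∀ f g : G, ConeGe C f g → ConeGe C g f → f = g)
include hC hanti

theorem nonneg_of_coneGe_pow (hf : IsDominant C f) (hg : g ∈ C) {k : ℕ} {p : ℤ}
    (hp : ConeGe C (f ^ p) (g ^ k)) : 0 ≤ p := by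
  rw [← hC.zpow_mem_iff hanti hf.1 hf.2.1, ← coneGe_one_iff]
  exact hp.trans hC (coneGe_one_iff.mpr (hC.pow_mem hg k))

theorem bddBelow_gammaK_set (hf : IsDominant C f) (hg : g ∈ C) (k : ℕ) :
    BddBelow {p : ℤ | ConeGe C (f ^ p) (g ^ k)} :=
  ⟨0, fun _ hp => nonneg_of_coneGe_pow hC hanti hf hg hp⟩

theorem gammaK_spec (hf : IsDominant C f) (hg : g ∈ C) (k : ℕ) :
    ConeGe C (f ^ gammaK C f g k) (g ^ k) := by
  obtain ⟨p, hp⟩ := hf.2.2 (g ^ k)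
  exact Int.csInf_mem ⟨p, by simpa using hp⟩ (bddBelow_gammaK_set hC hanti hf hg k)

theorem gammaK_le (hf : IsDominant C f) (hg : g ∈ C) {k : ℕ} {p : ℤ}
    (hp : ConeGe C (f ^ p) (g ^ k)) : gammaK C f g k ≤ p :=
  csInf_le (bddBelow_gammaK_set hC hanti hf hg k) hp

theorem gammaK_nonneg (hf : IsDominant C f) (hg : g ∈ C) (k : ℕ) : 0 ≤ gammaK C f g k :=
  nonneg_of_coneGe_pow hC hanti hf hg (gammaK_spec hC hanti hf hg k)

theorem gammaK_le_mul_gammaK_one (hf : IsDominant C f) (hg : g ∈ C) (m : ℕ) :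
    gammaK C f g m ≤ m * gammaK C f g 1 := by
  have h := (by simpa using gammaK_spec hC hanti hf hg 1 : ConeGe C _ g).pow hC m
  rw [← zpow_natCast, ← zpow_mul, mul_comm] at h
  exact gammaK_le hC hanti hf hg h

theorem le_gammaK_toNat_gammaK (hf : IsDominant C f) (hg : IsDominant C g) (k : ℕ) :
    (k : ℤ) ≤ gammaK C g f (gammaK C f g k).toNat := by
  have hgf := gammaK_spec hC hanti hg hf.1 (gammaK C f g k).toNat
  rw [← zpow_natCast, Int.toNat_of_nonneg (gammaK_nonneg hC hanti hf hg.1 k)] at hgf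
  have hgg := hgf.trans hC (gammaK_spec hC hanti hf hg.1 k)
  rwa [← zpow_natCast, coneGe_zpow_zpow_iff hC hanti hg.1 hg.2.1] at hgg

theorem tendsto_toNat_gammaK (hf : IsDominant C f) (hg : IsDominant C g) :
    Tendsto (fun k => (gammaK C f g k).toNat) atTop atTop := by
  have hbound : ∀ k, k ≤ (gammaK C g f 1).toNat * (gammaK C f g k).toNat := fun k => by
    have h := (le_gammaK_toNat_gammaK hC hanti hf hg k).trans
      (gammaK_le_mul_gammaK_one hC hanti hg hf.1 _)
    rw [← Int.toNat_of_nonneg (gammaK_nonneg hC hanti hg hf.1 1), mul_comm] at h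
    exact_mod_cast h
  have hc : (gammaK C g f 1).toNat ≠ 0 := fun h => by simpa [h] using hbound 1
  exact tendsto_atTop_mono (fun k => Nat.div_le_of_le_mul (hbound k))
    (Nat.tendsto_div_const_atTop hc)

end Gamma

theorem one_le_mul_of_tendsto_div {a : ℕ → ℕ} {b : ℕ → ℝ} {A B : ℝ}
    (hA : Tendsto (fun k => (a k : ℝ) / k) atTop (nhds A))
    (hB : Tendsto (fun m => b m / m) atTop (nhds B))
    (ha : Tendsto a atTop atTop) (hab : ∀ k : ℕ, (k : ℝ) ≤ b (a k)) : 1 ≤ A * B := by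
  have hlim := (hB.comp ha).mul hA
  refine ge_of_tendsto (by simpa only [mul_comm B] using hlim) ?_
  filter_upwards [eventually_ge_atTop 1, ha.eventually_ge_atTop 1] with k hk hak
  have hk : (0 : ℝ) < k := by exact_mod_cast hk
  have hak : (a k : ℝ) ≠ 0 := by positivity
  rw [Function.comp_apply, div_mul_div_cancel₀ hak, one_le_div hk]
  exact hab k

/-- If `f` and `g` are both dominants then `γ(f,g) * γ(g,f) ≥ 1`. -/
theorem statement4 {G : Type*} [Group G] (C : Set G) (hC : IsNormalCone C)
    (hanti : ∀ f g : G, ConeGe C f g → ConeGe C g f → f = g)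
    (f g : G) (hf : IsDominant C f) (hg : IsDominant C g)
    (A B : ℝ)
    (hA : Tendsto (fun k : ℕ => (gammaK C f g k : ℝ) / (k : ℝ)) atTop (nhds A))
    (hB : Tendsto (fun k : ℕ => (gammaK C g f k : ℝ) / (k : ℝ)) atTop (nhds B)) :
    1 ≤ A * B := by
  have hcast : ∀ k, ((gammaK C f g k).toNat : ℝ) = gammaK C f g k := fun k => by
    exact_mod_cast Int.toNat_of_nonneg (gammaK_nonneg hC hanti hf hg.1 k)
  refine one_le_mul_of_tendsto_div (a := fun k => (gammaK C f g k).toNat) (by simpa only [hcast])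
    hB (tendsto_toNat_gammaK hC hanti hf hg) fun k => ?_
  exact_mod_cast le_gammaK_toNat_gammaK hC hanti hf hg k
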